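/- Define functions D_m : (0,∞) → ℝ recursively by D_0(t) = (4πt)^{-1/2} and D_m(t) = −(e^{−(2m−1)t}/(2(2m−1)π)) D'_{m−1}(t) for m ≥ 1. Then for every m ≥ 1 and t > 0, D_m(t) = (4πt)^{-(2m+1)/2} e^{−m²t} Σ_{k=0}^{m−1} (Γ(m−k+1/2)/Γ(m+1/2)) c_{m,k} t^k, where c_{m,0} = 1 and c_{m,k} = Σ_{1 ≤ i_1 < ⋯ < i_k ≤ m−1} i_1² ⋯ i_k² for 1 ≤ k ≤ m−1. -/

import Mathlib

open Real Finset

/-- `c m k` is the `k`-th elementary symmetric polynomial of `1², 2², …, (m-1)²`. -/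
noncomputable def c (m k : ℕ) : ℝ :=
  ∑ A ∈ (Finset.Icc 1 (m - 1)).powersetCard k, ∏ i ∈ A, (i : ℝ) ^ 2

/-!
Write `D_m(t) = (4πt)^{-(2m+1)/2} e^{-m²t} Q_m(t)`. One differentiation step of the recursion
turns the prefactor of index `m` into that of index `m + 1` and acts on the polynomial part as
`Q_{m+1} = Q_m + (2t/(2m+1)) (m² Q_m - Q_m')`. On coefficients `a_{m,k}` this reads
`a_{m+1,k+1} = a_{m,k+1} + (2/(2m+1)) (m² a_{m,k} - (k+1) a_{m,k+1})`, which the claimed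
coefficients `Γ(m-k+1/2)/Γ(m+1/2) c_{m,k}` satisfy by `Γ(s+1) = sΓ(s)` and the Pascal-type rule
`c_{m+1,k+1} = c_{m,k+1} + m² c_{m,k}` for elementary symmetric polynomials.
-/

open Polynomial

theorem Multiset.esymm_cons_succ {R : Type*} [CommSemiring R] (a : R) (s : Multiset R) (k : ℕ) :
    (a ::ₘ s).esymm (k + 1) = s.esymm (k + 1) + a * s.esymm k := by
  simp [Multiset.esymm, Multiset.sum_map_mul_left]

lemma c_zero_right (m : ℕ) : c m 0 = 1 := by
  simp [c]

lemma c_eq_zero_of_le {m k : ℕ} (hk : 1 ≤ k) (h : m ≤ k) : c m k = 0 := by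
  rw [c, Finset.powersetCard_eq_empty.2 (by simp; omega), Finset.sum_empty]

lemma c_succ_succ (m k : ℕ) : c (m + 1) (k + 1) = c m (k + 1) + (m : ℝ) ^ 2 * c m k := by
  rcases m with _ | n
  · simp [c]
  · have hIcc : Finset.Icc 1 (n + 1) = insert (n + 1) (Finset.Icc 1 n) :=
      (Finset.insert_Icc_right_eq_Icc_add_one (by omega)).symm
    simp only [c, ← Finset.esymm_map_val, Nat.add_sub_cancel, hIcc,
      Finset.insert_val_of_notMem (by simp : n + 1 ∉ Finset.Icc 1 n), Multiset.map_cons,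
      Multiset.esymm_cons_succ]

noncomputable def gammaRatio (m k : ℕ) : ℝ := Gamma (m - k + 1 / 2) / Gamma (m + 1 / 2)

lemma gammaRatio_zero_right (m : ℕ) : gammaRatio m 0 = 1 := by
  rw [gammaRatio, Nat.cast_zero, sub_zero, div_self (Gamma_pos_of_pos (by positivity)).ne']

lemma gammaRatio_succ_succ (m k : ℕ) :
    gammaRatio (m + 1) (k + 1) = 2 / (2 * m + 1) * gammaRatio m k := by
  have hΓ : Gamma ((m : ℝ) + 1 + 1 / 2) = (m + 1 / 2) * Gamma (m + 1 / 2) := by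
    rw [add_right_comm, Gamma_add_one (by positivity)]
  have hΓpos : 0 < Gamma ((m : ℝ) + 1 / 2) := Gamma_pos_of_pos (by positivity)
  rw [gammaRatio, gammaRatio, Nat.cast_succ, Nat.cast_succ, hΓ,
    show (m : ℝ) + 1 - (k + 1) + 1 / 2 = m - k + 1 / 2 by ring]
  field_simp

lemma gammaRatio_eq_mul_succ (m k : ℕ) :
    gammaRatio m k = (m - k - 1 / 2) * gammaRatio m (k + 1) := by
  have hhalf : (m : ℝ) - k - 1 / 2 ≠ 0 := by
    intro h
    have : (2 * m : ℝ) = 2 * k + 1 := by linarith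
    norm_cast at this
    omega
  rw [gammaRatio, gammaRatio, Nat.cast_succ,
    show (m : ℝ) - (k + 1) + 1 / 2 = m - k - 1 / 2 by ring, ← mul_div_assoc,
    ← Gamma_add_one hhalf]
  ring_nf

noncomputable def heatCoeff (m k : ℕ) : ℝ := gammaRatio m k * c m k

lemma heatCoeff_zero_right (m : ℕ) : heatCoeff m 0 = 1 := by
  rw [heatCoeff, gammaRatio_zero_right, c_zero_right, one_mul]

lemma heatCoeff_eq_zero_of_le {m k : ℕ} (hk : 1 ≤ k) (h : m ≤ k) : heatCoeff m k = 0 := by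
  rw [heatCoeff, c_eq_zero_of_le hk h, mul_zero]

lemma heatCoeff_succ_succ (m k : ℕ) :
    heatCoeff (m + 1) (k + 1) = heatCoeff m (k + 1) +
      2 / (2 * m + 1) * (m ^ 2 * heatCoeff m k - (k + 1) * heatCoeff m (k + 1)) := by
  have h := gammaRatio_eq_mul_succ m k
  rw [heatCoeff, heatCoeff, heatCoeff, gammaRatio_succ_succ, c_succ_succ]
  field_simp
  linear_combination (2 * c m (k + 1)) * h

noncomputable def heatPoly (m : ℕ) : ℝ[X] := ∑ k ∈ range (m + 1), C (heatCoeff m k) * X ^ k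

lemma coeff_heatPoly (m k : ℕ) : (heatPoly m).coeff k = heatCoeff m k := by
  simp only [heatPoly, finsetSum_coeff, coeff_C_mul_X_pow, Finset.sum_ite_eq, mem_range]
  split_ifs with hk
  · rfl
  · exact (heatCoeff_eq_zero_of_le (by omega) (by omega)).symm

lemma heatPoly_zero : heatPoly 0 = 1 := by
  simp [heatPoly, heatCoeff_zero_right]

lemma heatPoly_succ (m : ℕ) :
    heatPoly (m + 1) = heatPoly m + C (2 / (2 * (m : ℝ) + 1)) * X *
      (C ((m : ℝ) ^ 2) * heatPoly m - derivative (heatPoly m)) := by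
  ext k
  rcases k with _ | k
  · simp [coeff_heatPoly, heatCoeff_zero_right]
  · simp only [coeff_add, mul_assoc, coeff_C_mul, coeff_X_mul, coeff_sub, coeff_derivative,
      coeff_heatPoly, heatCoeff_succ_succ]
    ring

lemma eval_heatPoly {m : ℕ} (hm : 1 ≤ m) (t : ℝ) :
    (heatPoly m).eval t = ∑ k ∈ range m, heatCoeff m k * t ^ k := by
  simp [heatPoly, eval_finsetSum, sum_range_succ _ m, heatCoeff_eq_zero_of_le hm le_rfl]

noncomputable def heatProfile (m : ℕ) (p : ℝ[X]) (t : ℝ) : ℝ :=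
  (4 * π * t) ^ (-(2 * (m : ℝ) + 1) / 2) * exp (-(m : ℝ) ^ 2 * t) * p.eval t

lemma hasDerivAt_heatProfile (m : ℕ) (p : ℝ[X]) {t : ℝ} (ht : 0 < t) :
    HasDerivAt (heatProfile m p)
      ((4 * π * t) ^ (-(2 * (m : ℝ) + 1) / 2 - 1) * exp (-(m : ℝ) ^ 2 * t) *
        (4 * π * (-(2 * (m : ℝ) + 1) / 2 * p.eval t +
          t * ((derivative p).eval t - m ^ 2 * p.eval t)))) t := by
  have hpow : HasDerivAt (fun s => (4 * π * s) ^ (-(2 * (m : ℝ) + 1) / 2))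
      (4 * π * (-(2 * (m : ℝ) + 1) / 2) * (4 * π * t) ^ (-(2 * (m : ℝ) + 1) / 2 - 1)) t :=
    ((hasDerivAt_id t).const_mul (4 * π)).rpow_const (Or.inl (by positivity)) |>.congr_deriv
      (by simp)
  have hexp : HasDerivAt (fun s => exp (-(m : ℝ) ^ 2 * s))
      (exp (-(m : ℝ) ^ 2 * t) * -(m : ℝ) ^ 2) t :=
    ((hasDerivAt_id t).const_mul _).exp.congr_deriv (by simp)
  refine ((hpow.mul hexp).mul (p.hasDerivAt t)).congr_deriv ?_
  rw [Pi.mul_apply, rpow_sub_one (by positivity)]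
  field_simp
  ring

lemma heatProfile_succ (m : ℕ) (p : ℝ[X]) {t : ℝ} (ht : 0 < t) :
    heatProfile (m + 1)
        (p + C (2 / (2 * (m : ℝ) + 1)) * X * (C ((m : ℝ) ^ 2) * p - derivative p)) t =
      -(exp (-(2 * (m : ℝ) + 1) * t) / (2 * (2 * m + 1) * π)) * deriv (heatProfile m p) t := by
  have hexp : exp (-((m : ℝ) + 1) ^ 2 * t) =
      exp (-(2 * (m : ℝ) + 1) * t) * exp (-(m : ℝ) ^ 2 * t) := by
    rw [← exp_add]; ring_nf
  rw [(hasDerivAt_heatProfile m p ht).deriv, heatProfile, Nat.cast_succ, hexp,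
    show -(2 * ((m : ℝ) + 1) + 1) / 2 = -(2 * (m : ℝ) + 1) / 2 - 1 by ring]
  simp only [eval_add, eval_mul, eval_C, eval_X, eval_sub]
  field_simp
  ring

/-- The diagonal of the heat kernel of the `(2m+1)`-dimensional hyperbolic space:
starting from `D₀(t) = (4πt)^{-1/2}` and iterating
`D_m(t) = -(e^{-(2m-1)t}/(2(2m-1)π)) D'_{m-1}(t)`, one has
`D_m(t) = (4πt)^{-(2m+1)/2} e^{-m²t} Σ_{k=0}^{m-1} (Γ(m-k+1/2)/Γ(m+1/2)) c_{m,k} t^k`. -/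
theorem hyperbolic_diagonal_heat_kernel (D : ℕ → ℝ → ℝ)
    (hD0 : ∀ t ∈ Set.Ioi (0 : ℝ), D 0 t = (4 * π * t) ^ (-(1 : ℝ) / 2))
    (hDrec : ∀ m : ℕ, 1 ≤ m → ∀ t ∈ Set.Ioi (0 : ℝ),
      D m t = -(Real.exp (-(2 * (m : ℝ) - 1) * t) / (2 * (2 * (m : ℝ) - 1) * π)) *
        deriv (D (m - 1)) t) :
    ∀ m : ℕ, 1 ≤ m → ∀ t ∈ Set.Ioi (0 : ℝ),
      D m t = (4 * π * t) ^ (-(2 * (m : ℝ) + 1) / 2) * Real.exp (-(m : ℝ) ^ 2 * t) *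
        ∑ k ∈ Finset.range m,
          Real.Gamma ((m : ℝ) - (k : ℝ) + 1 / 2) / Real.Gamma ((m : ℝ) + 1 / 2) *
            c m k * t ^ k := by
  have hD : ∀ m, Set.EqOn (D m) (heatProfile m (heatPoly m)) (Set.Ioi 0) := by
    intro m
    induction m with
    | zero =>
      intro t ht
      simp [hD0 t ht, heatProfile, heatPoly_zero]
    | succ m ih =>
      intro t ht
      have hcoef : 2 * ((m + 1 : ℕ) : ℝ) - 1 = 2 * m + 1 := by push_cast; ring
      rw [hDrec (m + 1) m.succ_pos t ht, Nat.add_sub_cancel, hcoef,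
        (ih.eventuallyEq_of_mem (Ioi_mem_nhds ht)).deriv_eq, heatPoly_succ,
        heatProfile_succ m _ ht]
  intro m hm t ht
  rw [hD m ht, heatProfile, eval_heatPoly hm]
  rfl
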